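/- arXiv:1510.04062 — 4 statements merged into one kernel-verified Lean document; each statement's English description precedes it below -/
import Mathlib

section
/- If λ lies in the interior of Λ, then ln Z is twice differentiable at λ and its Hessian matrix at λ equals the covariance matrix C(λ) of h under the density f_λ: ∂² ln Z/∂λ_j ∂λ_k (λ) = ∫_S h_j h_k f_λ dm − (∫_S h_j f_λ dm)(∫_S h_k f_λ dm). In particular the Hessian of ln Z is positive semidefinite at every interior point of Λ. -/
open MeasureTheory

/-- The partition function `Z(λ) = ∫ exp(-⟨λ, h(x)⟩) dm(x)`. -/
noncomputable def partitionZ {S : Type*} [MeasurableSpace S] (m : Measure S)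
    {M : ℕ} (h : S → Fin M → ℝ) (lam : Fin M → ℝ) : ℝ :=
  ∫ x, Real.exp (-(∑ k, lam k * h x k)) ∂m

/-- The domain `Λ = {λ : Z(λ) < ∞}` of the partition function. -/
def partitionDomain {S : Type*} [MeasurableSpace S] (m : Measure S)
    {M : ℕ} (h : S → Fin M → ℝ) : Set (Fin M → ℝ) :=
  {lam | Integrable (fun x => Real.exp (-(∑ k, lam k * h x k))) m}

/-- The maximum-entropy density `f_λ(x) = exp(-⟨λ, h(x)⟩) / Z(λ)`. -/
noncomputable def maxentDensity {S : Type*} [MeasurableSpace S] (m : Measure S)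
    {M : ℕ} (h : S → Fin M → ℝ) (lam : Fin M → ℝ) (x : S) : ℝ :=
  Real.exp (-(∑ k, lam k * h x k)) / partitionZ m h lam

/-- The covariance matrix of `h` under the density `f_λ`:
`C(λ)_{jk} = ∫ h_j h_k f_λ dm − (∫ h_j f_λ dm)(∫ h_k f_λ dm)`. -/
noncomputable def maxentCov {S : Type*} [MeasurableSpace S] (m : Measure S)
    {M : ℕ} (h : S → Fin M → ℝ) (lam : Fin M → ℝ) : Matrix (Fin M) (Fin M) ℝ :=
  fun j k => ∫ x, h x j * h x k * maxentDensity m h lam x ∂m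
    - (∫ x, h x j * maxentDensity m h lam x ∂m) * (∫ x, h x k * maxentDensity m h lam x ∂m)

/-! Near an interior point `a` of `Λ` the weights `e^{-⟨l, h x⟩}` are dominated uniformly in `l`:
for `‖l - a‖∞ ≤ ε` one has `e^{ε‖h x‖₁} e^{-⟨l, h x⟩} ≤ e^{2ε‖h x‖₁} e^{-⟨a, h x⟩}`, and
`e^{2ε‖h x‖₁}` is at most the sum of `e^{⟨v, h x⟩}` over the vertices `v` of the cube of radius `2ε`,
so the bound is a finite sum of weights at points of `Λ`. As `e^{ε t}` absorbs every polynomial in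
`t`, all moments of `h` are integrable near `a`, and both `Z` and `∂_k Z = -∫ h_k e^{-⟨l, h⟩}` can be
differentiated under the integral sign. The quotient rule for `∂_k log Z = ∂_k Z / Z` produces the
covariance, and `vᵀ C v` is the variance of `⟨v, h⟩` under `f_λ`. -/

open Real Metric Filter Topology

theorem hasFDerivAt_fderiv_log_apply {E : Type*} [NormedAddCommGroup E] [NormedSpace ℝ E]
    {f : E → ℝ} {f' : E → E →L[ℝ] ℝ} {g : E →L[ℝ] ℝ} {a v : E}
    (hf : ∀ᶠ l in 𝓝 a, HasFDerivAt f (f' l) l) (hf'v : HasFDerivAt (fun l => f' l v) g a)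
    (ha : f a ≠ 0) :
    HasFDerivAt (fun l => fderiv ℝ (fun l => log (f l)) l v)
      ((f a)⁻¹ • g - (f' a v / f a ^ 2) • f' a) a := by
  have hfa := hf.self_of_nhds
  have hlog : (fun l => fderiv ℝ (fun l => log (f l)) l v) =ᶠ[𝓝 a] fun l => (f l)⁻¹ * f' l v := by
    filter_upwards [hf, hfa.continuousAt.eventually_ne ha] with l hl hl0
    simp [(hl.log hl0).fderiv]
  have hinv : HasFDerivAt (fun l => (f l)⁻¹) (-(f a ^ 2)⁻¹ • f' a) a :=
    (hasDerivAt_inv ha).comp_hasFDerivAt a hfa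
  refine ((hinv.mul hf'v).congr_of_eventuallyEq hlog).congr_fderiv ?_
  ext u
  simp only [add_apply, sub_apply, smul_apply, smul_eq_mul]
  ring

section Finite

variable {ι : Type*} [Fintype ι]

def absSum (y : ι → ℝ) : ℝ := ∑ k, |y k|

theorem absSum_nonneg (y : ι → ℝ) : 0 ≤ absSum y :=
  Finset.sum_nonneg fun _ _ => abs_nonneg _

theorem abs_le_absSum (y : ι → ℝ) (k : ι) : |y k| ≤ absSum y :=
  Finset.single_le_sum (f := fun k => |y k|) (fun _ _ => abs_nonneg _) (Finset.mem_univ k)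

theorem abs_le_one_add_absSum (y : ι → ℝ) (k : ι) : |y k| ≤ 1 + absSum y := by
  linarith [abs_le_absSum y k]

theorem abs_mul_le_one_add_absSum_sq (y : ι → ℝ) (j k : ι) : |y j * y k| ≤ (1 + absSum y) ^ 2 := by
  rw [abs_mul, sq]
  exact mul_le_mul (abs_le_one_add_absSum y j) (abs_le_one_add_absSum y k) (abs_nonneg _)
    (by linarith [absSum_nonneg y])

theorem abs_sum_mul_le (a y : ι → ℝ) : |∑ k, a k * y k| ≤ ‖a‖ * absSum y := by
  calc |∑ k, a k * y k| ≤ ∑ k, |a k| * |y k| := by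
        simpa only [abs_mul] using Finset.abs_sum_le_sum_abs (fun k => a k * y k) Finset.univ
    _ ≤ ∑ k, ‖a‖ * |y k| := by
        gcongr with k
        exact norm_le_pi_norm a k
    _ = ‖a‖ * absSum y := (Finset.mul_sum _ _ _).symm

theorem norm_sum_smul_proj_le (c : ι → ℝ) :
    ‖∑ k, c k • (ContinuousLinearMap.proj k : (ι → ℝ) →L[ℝ] ℝ)‖ ≤ absSum c := by
  refine ContinuousLinearMap.opNorm_le_bound _ (absSum_nonneg c) fun v => ?_
  simpa [mul_comm] using abs_sum_mul_le v c

noncomputable def cubeVertices [DecidableEq ι] (r : ℝ) : Finset (ι → ℝ) :=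
  Fintype.piFinset fun _ => {-r, r}

theorem norm_le_of_mem_cubeVertices [DecidableEq ι] {r : ℝ} (hr : 0 ≤ r) {v : ι → ℝ}
    (hv : v ∈ cubeVertices r) : ‖v‖ ≤ r := by
  refine (pi_norm_le_iff_of_nonneg hr).2 fun k => ?_
  have hk := Fintype.mem_piFinset.1 hv k
  simp only [Finset.mem_insert, Finset.mem_singleton] at hk
  rcases hk with hk | hk <;> simp [hk, abs_of_nonneg hr]

theorem exp_mul_absSum_le [DecidableEq ι] (r : ℝ) (y : ι → ℝ) :
    exp (r * absSum y) ≤ ∑ v ∈ cubeVertices r, exp (∑ k, v k * y k) := by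
  classical
  set w : ι → ℝ := fun k => if 0 ≤ y k then r else -r
  have hw : w ∈ cubeVertices r := Fintype.mem_piFinset.2 fun k => by
    by_cases hk : 0 ≤ y k <;> simp [w, hk]
  have hrw : r * absSum y = ∑ k, w k * y k := by
    rw [absSum, Finset.mul_sum]
    refine Finset.sum_congr rfl fun k _ => ?_
    by_cases hk : 0 ≤ y k
    · simp [w, hk, abs_of_nonneg hk]
    · simp [w, hk, abs_of_neg (not_le.1 hk)]
  rw [hrw]
  exact Finset.single_le_sum (f := fun v => exp (∑ k, v k * y k)) (fun _ _ => (exp_pos _).le) hw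

end Finite

section GibbsWeight

variable {S ι : Type*} [Fintype ι]

noncomputable def gibbsWeight (h : S → ι → ℝ) (l : ι → ℝ) (x : S) : ℝ :=
  exp (-∑ k, l k * h x k)

theorem gibbsWeight_pos (h : S → ι → ℝ) (l : ι → ℝ) (x : S) : 0 < gibbsWeight h l x :=
  exp_pos _

theorem hasFDerivAt_gibbsWeight (h : S → ι → ℝ) (x : S) (l : ι → ℝ) :
    HasFDerivAt (fun l => gibbsWeight h l x)
      (-∑ k, (h x k * gibbsWeight h l x) • (ContinuousLinearMap.proj k : (ι → ℝ) →L[ℝ] ℝ)) l := by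
  let L : (ι → ℝ) →L[ℝ] ℝ := -∑ k, h x k • (ContinuousLinearMap.proj k : (ι → ℝ) →L[ℝ] ℝ)
  have hL : ∀ l, exp (L l) = gibbsWeight h l x := fun l => by simp [L, gibbsWeight, mul_comm]
  simp only [← hL]
  refine L.hasFDerivAt.exp.congr_fderiv ?_
  simp only [L, Finset.smul_sum, smul_neg, smul_smul, mul_comm]

theorem gibbsWeight_le_exp_mul (h : S → ι → ℝ) (l a : ι → ℝ) (x : S) :
    gibbsWeight h l x ≤ exp (‖l - a‖ * absSum (h x)) * gibbsWeight h a x := by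
  have hdiff : ∑ k, (l - a) k * h x k = ∑ k, l k * h x k - ∑ k, a k * h x k := by
    simp only [Pi.sub_apply, sub_mul, Finset.sum_sub_distrib]
  rw [gibbsWeight, gibbsWeight, ← exp_add, exp_le_exp]
  linarith [neg_abs_le (∑ k, (l - a) k * h x k), abs_sum_mul_le (l - a) (h x)]

theorem gibbsWeight_mul_exp_le [DecidableEq ι] (h : S → ι → ℝ) (a : ι → ℝ) (r : ℝ) (x : S) :
    gibbsWeight h a x * exp (r * absSum (h x)) ≤
      ∑ v ∈ cubeVertices r, gibbsWeight h (a - v) x := by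
  calc gibbsWeight h a x * exp (r * absSum (h x))
      ≤ gibbsWeight h a x * ∑ v ∈ cubeVertices r, exp (∑ k, v k * h x k) :=
        mul_le_mul_of_nonneg_left (exp_mul_absSum_le r (h x)) (gibbsWeight_pos h a x).le
    _ = ∑ v ∈ cubeVertices r, gibbsWeight h (a - v) x := by
        simp only [Finset.mul_sum, gibbsWeight, ← exp_add, Pi.sub_apply, sub_mul,
          Finset.sum_sub_distrib]
        ring_nf

theorem one_add_pow_le_mul_exp {ε t : ℝ} (hε : 0 < ε) (ht : 0 ≤ t) (p : ℕ) :
    (1 + t) ^ p ≤ p.factorial / ε ^ p * exp ε * exp (ε * t) := by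
  have := pow_div_factorial_le_exp _ (mul_nonneg hε.le (by linarith : 0 ≤ 1 + t)) p
  rw [div_le_iff₀ (by positivity), mul_pow, mul_add, mul_one, exp_add] at this
  rw [div_mul_eq_mul_div, div_mul_eq_mul_div, le_div_iff₀ (by positivity)]
  linarith

end GibbsWeight

section Moments

variable {S ι : Type*} [MeasurableSpace S] [Fintype ι] {m : Measure S} {h : S → ι → ℝ}
  {a : ι → ℝ}

theorem measurable_gibbsWeight (hmeas : ∀ k, Measurable fun x => h x k) (l : ι → ℝ) :
    Measurable (gibbsWeight h l) :=
  (Finset.measurable_sum _ fun k _ => (hmeas k).const_mul (l k)).neg.exp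

theorem exists_integrable_bound (ha : ∀ᶠ l in 𝓝 a, Integrable (gibbsWeight h l) m) (p : ℕ) :
    ∃ ε > 0, ∃ G : S → ℝ, Integrable G m ∧
      ∀ l ∈ ball a ε, ∀ x, (1 + absSum (h x)) ^ p * gibbsWeight h l x ≤ G x := by
  classical
  obtain ⟨δ, hδ, hδa⟩ := Metric.eventually_nhds_iff_ball.1 ha
  have hε : 0 < δ / 3 := by positivity
  refine ⟨δ / 3, hε, fun x => p.factorial / (δ / 3) ^ p * exp (δ / 3) *
    ∑ v ∈ cubeVertices (2 * (δ / 3)), gibbsWeight h (a - v) x, ?_, fun l hl x => ?_⟩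
  · refine (integrable_finsetSum _ fun v hv => hδa _ ?_).const_mul _
    rw [mem_ball, dist_eq_norm, sub_sub_cancel_left, norm_neg]
    exact (norm_le_of_mem_cubeVertices (by positivity) hv).trans_lt (by linarith)
  have hN := absSum_nonneg (h x)
  have hla : ‖l - a‖ ≤ δ / 3 := (mem_ball_iff_norm.1 hl).le
  calc (1 + absSum (h x)) ^ p * gibbsWeight h l x
      ≤ p.factorial / (δ / 3) ^ p * exp (δ / 3) * exp (δ / 3 * absSum (h x)) *
          (exp (δ / 3 * absSum (h x)) * gibbsWeight h a x) := by
        refine mul_le_mul (one_add_pow_le_mul_exp hε hN p) ?_ (gibbsWeight_pos h l x).le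
          (by positivity)
        exact (gibbsWeight_le_exp_mul h l a x).trans (mul_le_mul_of_nonneg_right
          (exp_le_exp.2 (mul_le_mul_of_nonneg_right hla hN)) (gibbsWeight_pos h a x).le)
    _ = p.factorial / (δ / 3) ^ p * exp (δ / 3) *
          (gibbsWeight h a x * exp (2 * (δ / 3) * absSum (h x))) := by
        rw [two_mul, add_mul, exp_add]; ring
    _ ≤ _ := mul_le_mul_of_nonneg_left (gibbsWeight_mul_exp_le h a _ x) (by positivity)

theorem integrable_mul_gibbsWeight (hmeas : ∀ k, Measurable fun x => h x k)
    (ha : ∀ᶠ l in 𝓝 a, Integrable (gibbsWeight h l) m) {g : S → ℝ}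
    (hg : AEStronglyMeasurable g m) {n : ℕ} (hgb : ∀ x, |g x| ≤ (1 + absSum (h x)) ^ n) :
    ∀ᶠ l in 𝓝 a, Integrable (fun x => g x * gibbsWeight h l x) m := by
  obtain ⟨ε, hε, G, hG, hGb⟩ := exists_integrable_bound ha n
  filter_upwards [ball_mem_nhds a hε] with l hl
  refine hG.mono' (hg.mul (measurable_gibbsWeight hmeas l).aestronglyMeasurable)
    (ae_of_all _ fun x => ?_)
  rw [norm_mul, Real.norm_eq_abs, Real.norm_of_nonneg (gibbsWeight_pos h l x).le]
  exact (mul_le_mul_of_nonneg_right (hgb x) (gibbsWeight_pos h l x).le).trans (hGb l hl x)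

theorem hasFDerivAt_integral_mul_gibbsWeight (hmeas : ∀ k, Measurable fun x => h x k)
    (ha : ∀ᶠ l in 𝓝 a, Integrable (gibbsWeight h l) m) {g : S → ℝ} (hg : Measurable g) {n : ℕ}
    (hgb : ∀ x, |g x| ≤ (1 + absSum (h x)) ^ n) :
    ∀ᶠ l in 𝓝 a, HasFDerivAt (fun l => ∫ x, g x * gibbsWeight h l x ∂m)
      (-∑ k, (∫ x, h x k * g x * gibbsWeight h l x ∂m) •
        (ContinuousLinearMap.proj k : (ι → ℝ) →L[ℝ] ℝ)) l := by
  obtain ⟨ε, hε, G, hG, hGb⟩ := exists_integrable_bound ha (n + 1)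
  have hgk : ∀ k x, |h x k * g x| ≤ (1 + absSum (h x)) ^ (n + 1) := fun k x => by
    rw [abs_mul, pow_succ']
    exact mul_le_mul (abs_le_one_add_absSum (h x) k) (hgb x) (abs_nonneg _)
      (by linarith [absSum_nonneg (h x)])
  filter_upwards [ball_mem_nhds a hε,
    integrable_mul_gibbsWeight hmeas ha hg.aestronglyMeasurable hgb,
    eventually_all.2 fun k => integrable_mul_gibbsWeight (g := fun x => h x k * g x) hmeas ha
      ((hmeas k).mul hg).aestronglyMeasurable (hgk k)]
    with l hl hint hintk
  have hderiv := hasFDerivAt_integral_of_dominated_of_fderiv_le (μ := m)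
    (F' := fun l x => -∑ k, (h x k * g x * gibbsWeight h l x) •
      (ContinuousLinearMap.proj k : (ι → ℝ) →L[ℝ] ℝ))
    (isOpen_ball.mem_nhds hl)
    (Eventually.of_forall fun l => (hg.mul (measurable_gibbsWeight hmeas l)).aestronglyMeasurable)
    hint ?_ (ae_of_all _ fun x l' hl' => ?_) hG (ae_of_all _ fun x l' _ => ?_)
  · refine hderiv.congr_fderiv ?_
    rw [integral_neg, integral_finsetSum _ fun k _ => (hintk k).smul_const _]
    simp only [integral_smul_const]
  · exact (Finset.aestronglyMeasurable_fun_sum _ fun k _ =>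
      (((hmeas k).mul hg).mul (measurable_gibbsWeight hmeas l)).aestronglyMeasurable.smul_const
        (ContinuousLinearMap.proj k : (ι → ℝ) →L[ℝ] ℝ)).neg
  · have hsum : absSum (fun k => h x k * g x * gibbsWeight h l' x) =
        absSum (h x) * |g x| * gibbsWeight h l' x := by
      simp only [absSum, abs_mul, abs_of_pos (gibbsWeight_pos h l' x), ← Finset.sum_mul]
    rw [norm_neg]
    refine (norm_sum_smul_proj_le _).trans (le_trans ?_ (hGb l' hl' x))
    rw [hsum, pow_succ']
    exact mul_le_mul_of_nonneg_right (mul_le_mul (by linarith) (hgb x) (abs_nonneg _)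
      (by linarith [absSum_nonneg (h x)])) (gibbsWeight_pos h l' x).le
  · exact ((hasFDerivAt_gibbsWeight h x l').const_mul (g x)).congr_fderiv
      (by simp only [smul_neg, Finset.smul_sum, smul_smul, mul_left_comm (g x), mul_assoc])

end Moments

section Variance

variable {S ι : Type*} [MeasurableSpace S] [Fintype ι] {m : Measure S} {ρ : S → ℝ}

theorem sq_integral_mul_le_integral_sq_mul (hρ : 0 ≤ ρ) (hρi : Integrable ρ m)
    (hρ1 : ∫ x, ρ x ∂m = 1) {g : S → ℝ} (hg : Integrable (fun x => g x * ρ x) m)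
    (hg2 : Integrable (fun x => g x ^ 2 * ρ x) m) :
    (∫ x, g x * ρ x ∂m) ^ 2 ≤ ∫ x, g x ^ 2 * ρ x ∂m := by
  set c := ∫ x, g x * ρ x ∂m
  have hvar : 0 ≤ ∫ x, (g x - c) ^ 2 * ρ x ∂m :=
    integral_nonneg fun x => mul_nonneg (sq_nonneg _) (hρ x)
  have hexpand : (fun x => (g x - c) ^ 2 * ρ x) =
      fun x => g x ^ 2 * ρ x - 2 * c * (g x * ρ x) + c ^ 2 * ρ x := by
    funext x; ring
  have hint : Integrable (fun x => g x ^ 2 * ρ x - 2 * c * (g x * ρ x)) m :=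
    hg2.sub (hg.const_mul _)
  rw [hexpand, integral_add hint (hρi.const_mul _),
    integral_sub hg2 (hg.const_mul _), integral_const_mul, integral_const_mul, hρ1] at hvar
  linarith

theorem sum_mul_mul_covariance_nonneg (hρ : 0 ≤ ρ) (hρi : Integrable ρ m)
    (hρ1 : ∫ x, ρ x ∂m = 1) {u : ι → S → ℝ} (hu : ∀ k, Integrable (fun x => u k x * ρ x) m)
    (huu : ∀ j k, Integrable (fun x => u j x * u k x * ρ x) m) (v : ι → ℝ) :
    0 ≤ ∑ j, ∑ k, v j * v k *
      (∫ x, u j x * u k x * ρ x ∂m - (∫ x, u j x * ρ x ∂m) * ∫ x, u k x * ρ x ∂m) := by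
  set g := fun x => ∑ k, v k * u k x
  have hg : (fun x => g x * ρ x) = fun x => ∑ k, v k * (u k x * ρ x) := by
    funext x; simp only [g, Finset.sum_mul, mul_assoc]
  have hg2 : (fun x => g x ^ 2 * ρ x) = fun x => ∑ j, ∑ k, v j * v k * (u j x * u k x * ρ x) := by
    funext x
    rw [sq, Finset.sum_mul_sum, Finset.sum_mul]
    refine Finset.sum_congr rfl fun j _ => ?_
    rw [Finset.sum_mul]
    exact Finset.sum_congr rfl fun k _ => by ring
  have hint1 : ∀ k, Integrable (fun x => v k * (u k x * ρ x)) m := fun k => (hu k).const_mul _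
  have hint2 : ∀ j k, Integrable (fun x => v j * v k * (u j x * u k x * ρ x)) m :=
    fun j k => (huu j k).const_mul _
  have hmean : ∫ x, g x * ρ x ∂m = ∑ k, v k * ∫ x, u k x * ρ x ∂m := by
    rw [hg, integral_finsetSum _ fun k _ => hint1 k]
    simp only [integral_const_mul]
  have hsecond : ∫ x, g x ^ 2 * ρ x ∂m =
      ∑ j, ∑ k, v j * v k * ∫ x, u j x * u k x * ρ x ∂m := by
    rw [hg2, integral_finsetSum _ fun j _ => integrable_finsetSum _ fun k _ => hint2 j k]
    simp only [integral_finsetSum _ fun k _ => hint2 _ k, integral_const_mul]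
  have hvar := sq_integral_mul_le_integral_sq_mul hρ hρi hρ1
    (hg ▸ integrable_finsetSum _ fun k _ => hint1 k)
    (hg2 ▸ integrable_finsetSum _ fun j _ => integrable_finsetSum _ fun k _ => hint2 j k)
  rw [hmean, hsecond, sq, Finset.sum_mul_sum] at hvar
  simp only [mul_sub, Finset.sum_sub_distrib]
  calc (0 : ℝ) ≤ _ := sub_nonneg.2 hvar
    _ = _ := by
      congr 1
      exact Finset.sum_congr rfl fun j _ => Finset.sum_congr rfl fun k _ => by ring

end Variance

section PartitionFunction

variable {S : Type*} [MeasurableSpace S] {m : Measure S} {M : ℕ} {h : S → Fin M → ℝ}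
  {lam : Fin M → ℝ}

theorem hasFDerivAt_partitionZ (hmeas : ∀ k, Measurable fun x => h x k)
    (hint : ∀ᶠ l in 𝓝 lam, Integrable (gibbsWeight h l) m) :
    ∀ᶠ l in 𝓝 lam, HasFDerivAt (partitionZ m h)
      (-∑ k, (∫ x, h x k * gibbsWeight h l x ∂m) •
        (ContinuousLinearMap.proj k : (Fin M → ℝ) →L[ℝ] ℝ)) l := by
  filter_upwards [hasFDerivAt_integral_mul_gibbsWeight (g := fun _ => 1) (n := 0) hmeas hint
    measurable_const (fun x => by simp)] with l hl
  simp only [one_mul, mul_one] at hl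
  exact hl

theorem maxentCov_eq (m : Measure S) (h : S → Fin M → ℝ) (lam : Fin M → ℝ) (j k : Fin M) :
    maxentCov m h lam j k =
      (∫ x, h x j * h x k * gibbsWeight h lam x ∂m) / partitionZ m h lam -
        (∫ x, h x j * gibbsWeight h lam x ∂m) / partitionZ m h lam *
          ((∫ x, h x k * gibbsWeight h lam x ∂m) / partitionZ m h lam) := by
  simp only [maxentCov, maxentDensity, gibbsWeight, ← mul_div_assoc, integral_div]

theorem integrable_mul_maxentDensity (hmeas : ∀ k, Measurable fun x => h x k)
    (hint : ∀ᶠ l in 𝓝 lam, Integrable (gibbsWeight h l) m) {g : S → ℝ}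
    (hg : AEStronglyMeasurable g m) {n : ℕ} (hgb : ∀ x, |g x| ≤ (1 + absSum (h x)) ^ n) :
    Integrable (fun x => g x * maxentDensity m h lam x) m := by
  have := (integrable_mul_gibbsWeight hmeas hint hg hgb).self_of_nhds.div_const (partitionZ m h lam)
  simp only [mul_div_assoc] at this
  exact this

theorem sum_mul_mul_maxentCov_nonneg (hmeas : ∀ k, Measurable fun x => h x k)
    (hint : ∀ᶠ l in 𝓝 lam, Integrable (gibbsWeight h l) m) (hZ : 0 < partitionZ m h lam)
    (v : Fin M → ℝ) : 0 ≤ ∑ j, ∑ k, v j * v k * maxentCov m h lam j k := by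
  have hρ1 : ∫ x, maxentDensity m h lam x ∂m = 1 := by
    show ∫ x, gibbsWeight h lam x / partitionZ m h lam ∂m = 1
    rw [integral_div]
    exact div_self hZ.ne'
  exact sum_mul_mul_covariance_nonneg (fun x => div_nonneg (exp_pos _).le hZ.le)
    (hint.self_of_nhds.div_const _) hρ1
    (fun k => integrable_mul_maxentDensity hmeas hint (hmeas k).aestronglyMeasurable (n := 1)
      fun x => by simpa using abs_le_one_add_absSum (h x) k)
    (fun j k => integrable_mul_maxentDensity hmeas hint
      ((hmeas j).mul (hmeas k)).aestronglyMeasurable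
      fun x => abs_mul_le_one_add_absSum_sq (h x) j k) v

end PartitionFunction

theorem partitionZ_hessian_general
    {S : Type*} [MeasurableSpace S] (m : Measure S)
    {M : ℕ} (h : S → Fin M → ℝ) (hmeas : ∀ k, Measurable fun x => h x k)
    (lam : Fin M → ℝ) (hlam : lam ∈ interior (partitionDomain m h)) :
    DifferentiableAt ℝ (fun l => Real.log (partitionZ m h l)) lam ∧
    (∀ k, DifferentiableAt ℝ
        (fun l => fderiv ℝ (fun l' => Real.log (partitionZ m h l')) l (Pi.single k 1)) lam) ∧
    (∀ j k, fderiv ℝ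
        (fun l => fderiv ℝ (fun l' => Real.log (partitionZ m h l')) l (Pi.single k 1)) lam
          (Pi.single j 1)
        = maxentCov m h lam j k) ∧
    (∀ v : Fin M → ℝ, 0 ≤ ∑ j, ∑ k, v j * v k * maxentCov m h lam j k) := by
  rcases eq_or_ne m 0 with rfl | hm
  · simp [partitionZ, maxentCov]
  have hint : ∀ᶠ l in 𝓝 lam, Integrable (gibbsWeight h l) m := mem_interior_iff_mem_nhds.1 hlam
  have hZ := hasFDerivAt_partitionZ hmeas hint
  have hZpos : 0 < partitionZ m h lam :=
    have : NeZero m := ⟨hm⟩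
    integral_exp_pos hint.self_of_nhds
  have hZk : ∀ k, HasFDerivAt
      (fun l => (-∑ j, (∫ x, h x j * gibbsWeight h l x ∂m) •
        (ContinuousLinearMap.proj j : (Fin M → ℝ) →L[ℝ] ℝ)) (Pi.single k 1))
      (∑ j, (∫ x, h x j * h x k * gibbsWeight h lam x ∂m) •
        (ContinuousLinearMap.proj j : (Fin M → ℝ) →L[ℝ] ℝ)) lam := fun k => by
    have hk := hasFDerivAt_integral_mul_gibbsWeight (g := fun x => h x k) (n := 1) hmeas hint
      (hmeas k) fun x => by simpa using abs_le_one_add_absSum (h x) k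
    simpa [Pi.single_apply] using hk.self_of_nhds.fun_neg
  have hhess := fun k => hasFDerivAt_fderiv_log_apply hZ (hZk k) hZpos.ne'
  refine ⟨(hZ.self_of_nhds.log hZpos.ne').differentiableAt, fun k => (hhess k).differentiableAt,
    fun j k => ?_, sum_mul_mul_maxentCov_nonneg hmeas hint hZpos⟩
  rw [(hhess k).fderiv, maxentCov_eq]
  simp only [sub_apply, smul_apply, neg_apply, sum_apply, ContinuousLinearMap.proj_apply,
    Pi.single_apply, smul_eq_mul, mul_ite, mul_one, mul_zero, Finset.sum_ite_eq',
    Finset.mem_univ, ↓reduceIte]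
  field_simp

/-- at any interior point `λ` of `Λ`, `ln Z` is twice differentiable and its
Hessian matrix equals the covariance matrix `C(λ)` of `h` under `f_λ`; in particular the
Hessian of `ln Z` is positive semidefinite at every interior point. -/
theorem partitionZ_hessian
    {S : Type*} [MeasurableSpace S] (m : Measure S) [SigmaFinite m]
    {M : ℕ} (h : S → Fin M → ℝ) (hmeas : ∀ k, Measurable fun x => h x k)
    (lam : Fin M → ℝ) (hlam : lam ∈ interior (partitionDomain m h)) :
    DifferentiableAt ℝ (fun l => Real.log (partitionZ m h l)) lam ∧
    (∀ k, DifferentiableAt ℝ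
        (fun l => fderiv ℝ (fun l' => Real.log (partitionZ m h l')) l (Pi.single k 1)) lam) ∧
    (∀ j k, fderiv ℝ
        (fun l => fderiv ℝ (fun l' => Real.log (partitionZ m h l')) l (Pi.single k 1)) lam
          (Pi.single j 1)
        = maxentCov m h lam j k) ∧
    (∀ v : Fin M → ℝ, 0 ≤ ∑ j, ∑ k, v j * v k * maxentCov m h lam j k) :=
  partitionZ_hessian_general m h hmeas lam hlam
end

section
/- Let (X_n)_{n≥1} be i.i.d. S-valued random variables with E[h(X₁)] = d = φ(λ*), where λ* is in the interior of Λ and C(λ*) is strictly positive definite, and let d̂_N = (1/N)∑_{n=1}^N h(X_n), λ̂_N = ψ(d̂_N) (defined for large N almost surely). Then the sample maximum-entropy densities converge to f* = f_{λ*} in L¹(m): almost surely, ∫_S |f_{λ̂_N}(x) − f*(x)| dm(x) → 0 as N → ∞. -/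
/-!
The strong law of large numbers gives `d̂_N → d` almost surely, and `ψ` is continuous at `d`, so
`ψ(d̂_N) → λ*`. It remains to see that `λ ↦ f_λ` is continuous into `L¹(m)` at every interior
point `λ*` of `Λ`. On a small cube around `λ*`, `exp (-⟨λ, h⟩)` is bounded by the sum of its
values at the `2^M` corners of the cube, which is integrable since the corners lie in `Λ`;
dominated convergence then gives continuity of `Z` at `λ*` and, since `Z(λ*) > 0`, convergence
of `∫ |f_λ - f_{λ*}| dm` to `0`.
-/

open MeasureTheory ProbabilityTheory Matrix Filter

/-- The moment map `φ(λ) = ∫ h f_λ dm`. -/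
noncomputable def momentMap {S : Type*} [MeasurableSpace S] (m : Measure S)
    {M : ℕ} (h : S → Fin M → ℝ) (lam : Fin M → ℝ) : Fin M → ℝ :=
  fun k => ∫ x, h x k * maxentDensity m h lam x ∂m

/-- The empirical moment vector `d̂_N = (1/N) ∑_{n=1}^N h(X_n)`. -/
noncomputable def empiricalMoments {S Ω : Type*} {M : ℕ} (h : S → Fin M → ℝ)
    (X : ℕ → Ω → S) (N : ℕ) (ω : Ω) : Fin M → ℝ :=
  (N : ℝ)⁻¹ • ∑ n ∈ Finset.range N, h (X n ω)

open Topology Finset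

section CornerBound

variable {ι : Type*} [Fintype ι] [DecidableEq ι]

lemma exp_neg_mul_le_sum_exp_neg_endpoints {a b δ : ℝ} (hab : |a - b| ≤ δ) (y : ℝ) :
    Real.exp (-(a * y)) ≤ ∑ ε ∈ ({δ, -δ} : Finset ℝ), Real.exp (-((b + ε) * y)) := by
  have hsingle := fun ε (hε : ε ∈ ({δ, -δ} : Finset ℝ)) =>
    single_le_sum (f := fun ε => Real.exp (-((b + ε) * y))) (fun _ _ => (Real.exp_pos _).le) hε
  obtain ⟨hlo, hhi⟩ := abs_sub_le_iff.1 hab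
  rcases le_total 0 y with hy | hy
  · refine le_trans (Real.exp_le_exp.2 ?_) (hsingle (-δ) (by simp))
    nlinarith
  · refine le_trans (Real.exp_le_exp.2 ?_) (hsingle δ (by simp))
    nlinarith

lemma exp_neg_sum_mul_le_sum_corners {a b : ι → ℝ} {δ : ℝ} (hab : ∀ i, |a i - b i| ≤ δ)
    (y : ι → ℝ) :
    Real.exp (-(∑ i, a i * y i)) ≤
      ∑ e ∈ Fintype.piFinset fun _ : ι => ({δ, -δ} : Finset ℝ),
        Real.exp (-(∑ i, (b i + e i) * y i)) :=
  calc Real.exp (-(∑ i, a i * y i)) = ∏ i, Real.exp (-(a i * y i)) := by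
        rw [← sum_neg_distrib, Real.exp_sum]
    _ ≤ ∏ i, ∑ ε ∈ ({δ, -δ} : Finset ℝ), Real.exp (-((b i + ε) * y i)) :=
        prod_le_prod (fun _ _ => (Real.exp_pos _).le)
          fun i _ => exp_neg_mul_le_sum_exp_neg_endpoints (hab i) (y i)
    _ = _ := by
        rw [prod_univ_sum]
        refine sum_congr rfl fun e _ => ?_
        rw [← sum_neg_distrib, Real.exp_sum]

end CornerBound

section MaxentDensity

variable {S : Type*} [MeasurableSpace S] {m : Measure S} {M : ℕ} {h : S → Fin M → ℝ}
  {lam₀ : Fin M → ℝ}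

lemma maxentDensity_nonneg (lam : Fin M → ℝ) (x : S) : 0 ≤ maxentDensity m h lam x :=
  div_nonneg (Real.exp_pos _).le (integral_nonneg fun _ => (Real.exp_pos _).le)

lemma exists_integrable_bound_of_mem_interior_partitionDomain
    (hlam₀ : lam₀ ∈ interior (partitionDomain m h)) :
    ∃ g : S → ℝ, Integrable g m ∧
      ∀ᶠ lam in 𝓝 lam₀, ∀ x, Real.exp (-(∑ k, lam k * h x k)) ≤ g x := by
  obtain ⟨δ, hδ, hball⟩ :=
    Metric.nhds_basis_closedBall.mem_iff.1 (mem_interior_iff_mem_nhds.1 hlam₀)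
  refine ⟨fun x => ∑ e ∈ Fintype.piFinset fun _ : Fin M => ({δ, -δ} : Finset ℝ),
      Real.exp (-(∑ k, (lam₀ k + e k) * h x k)), integrable_finsetSum _ fun e he => hball ?_,
      ?_⟩
  · rw [Metric.mem_closedBall, dist_pi_le_iff hδ.le]
    intro k
    rcases mem_insert.1 (Fintype.mem_piFinset.1 he k) with hk | hk <;>
      simp_all [abs_of_pos hδ]
  · filter_upwards [Metric.closedBall_mem_nhds lam₀ hδ] with lam hlam x
    rw [Metric.mem_closedBall, dist_pi_le_iff hδ.le] at hlam
    exact exp_neg_sum_mul_le_sum_corners (fun k => (Real.dist_eq _ _).symm.trans_le (hlam k))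
      (h x)

lemma continuousAt_partitionZ (hmeas : ∀ k, Measurable fun x => h x k)
    (hlam₀ : lam₀ ∈ interior (partitionDomain m h)) :
    ContinuousAt (partitionZ m h) lam₀ := by
  obtain ⟨g, hg, hbound⟩ := exists_integrable_bound_of_mem_interior_partitionDomain hlam₀
  refine continuousAt_of_dominated (bound := g)
    (Eventually.of_forall fun lam => (by fun_prop : Measurable _).aestronglyMeasurable)
    (hbound.mono fun lam hlam => ae_of_all _ fun x => ?_) hg
    (ae_of_all _ fun x => (by fun_prop : Continuous _).continuousAt)
  rw [Real.norm_of_nonneg (Real.exp_pos _).le]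
  exact hlam x

theorem tendsto_integral_abs_sub_maxentDensity (hmeas : ∀ k, Measurable fun x => h x k)
    (hlam₀ : lam₀ ∈ interior (partitionDomain m h)) :
    Tendsto (fun lam => ∫ x, |maxentDensity m h lam x - maxentDensity m h lam₀ x| ∂m)
      (𝓝 lam₀) (𝓝 0) := by
  rcases eq_zero_or_neZero m with rfl | _
  · simp
  obtain ⟨g, hg, hbound⟩ := exists_integrable_bound_of_mem_interior_partitionDomain hlam₀
  have hZ := continuousAt_partitionZ hmeas hlam₀
  set Z₀ := partitionZ m h lam₀
  have hmem : lam₀ ∈ partitionDomain m h := interior_subset hlam₀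
  have hZ₀ : 0 < Z₀ := integral_exp_pos hmem
  have hZ_half : ∀ᶠ lam in 𝓝 lam₀, Z₀ / 2 < partitionZ m h lam :=
    hZ.eventually (lt_mem_nhds (half_lt_self hZ₀))
  have hdensity_le : ∀ᶠ lam in 𝓝 lam₀, ∀ x, maxentDensity m h lam x ≤ 2 / Z₀ * g x := by
    filter_upwards [hbound, hZ_half] with lam hlam hZlam x
    calc maxentDensity m h lam x ≤ g x / (Z₀ / 2) :=
          div_le_div₀ ((Real.exp_pos _).le.trans (hlam x)) (hlam x) (by positivity) hZlam.le
      _ = 2 / Z₀ * g x := by field_simp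
  have hlimit : ∀ x, Tendsto (fun lam => |maxentDensity m h lam x - maxentDensity m h lam₀ x|)
      (𝓝 lam₀) (𝓝 0) := fun x => by
    have hcont : ContinuousAt (fun lam => maxentDensity m h lam x) lam₀ :=
      (by fun_prop : Continuous _).continuousAt.div hZ hZ₀.ne'
    simpa using (hcont.tendsto.sub_const (maxentDensity m h lam₀ x)).abs
  simpa using tendsto_integral_filter_of_dominated_convergence
    (fun x => 2 / Z₀ * g x + maxentDensity m h lam₀ x)
    (Eventually.of_forall fun lam =>
      (by unfold maxentDensity; fun_prop : Measurable _).aestronglyMeasurable)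
    (hdensity_le.mono fun lam hlam => ae_of_all _ fun x => by
      rw [Real.norm_of_nonneg (abs_nonneg _)]
      refine (abs_sub _ _).trans ?_
      rw [abs_of_nonneg (maxentDensity_nonneg _ _), abs_of_nonneg (maxentDensity_nonneg _ _)]
      exact add_le_add_left (hlam x) _)
    ((hg.const_mul _).add ((hmem : Integrable _ m).div_const _))
    (ae_of_all _ hlimit)

end MaxentDensity

theorem ae_tendsto_empiricalMoments {S Ω : Type*} [MeasurableSpace S] [MeasurableSpace Ω]
    {μ : Measure Ω} {M : ℕ} {h : S → Fin M → ℝ} (hmeas : Measurable h) {X : ℕ → Ω → S}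
    (hindep : Pairwise fun i j => IndepFun (X i) (X j) μ)
    (hid : ∀ n, IdentDistrib (X n) (X 0) μ μ) (hint : Integrable (fun ω => h (X 0 ω)) μ) :
    ∀ᵐ ω ∂μ, Tendsto (fun N => empiricalMoments h X N ω) atTop
      (𝓝 (∫ ω, h (X 0 ω) ∂μ)) :=
  strong_law_ae _ hint (fun _ _ hij => (hindep hij).comp hmeas hmeas)
    fun n => (hid n).comp hmeas

theorem sample_maxent_L1_convergence_general
    {S : Type*} [MeasurableSpace S] (m : Measure S)
    {M : ℕ} (h : S → Fin M → ℝ) (hmeas : ∀ k, Measurable fun x => h x k)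
    (lamstar : Fin M → ℝ) (hlam : lamstar ∈ interior (partitionDomain m h))
    (V : Set (Fin M → ℝ)) (hVopen : IsOpen V) (hdV : momentMap m h lamstar ∈ V)
    (psi : (Fin M → ℝ) → (Fin M → ℝ))
    (hpsiC1 : ContDiffOn ℝ 1 psi V)
    (hpsistar : psi (momentMap m h lamstar) = lamstar)
    {Ω : Type*} [MeasurableSpace Ω] (μ : Measure Ω)
    (X : ℕ → Ω → S)
    (hindep : iIndepFun X μ)
    (hid : ∀ n, IdentDistrib (X n) (X 0) μ μ)
    (hint : ∀ k, Integrable (fun ω => h (X 0 ω) k) μ)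
    (hmean : ∀ k, ∫ ω, h (X 0 ω) k ∂μ = momentMap m h lamstar k) :
    ∀ᵐ ω ∂μ,
      Tendsto
        (fun N => ∫ x, |maxentDensity m h (psi (empiricalMoments h X N ω)) x
            - maxentDensity m h lamstar x| ∂m)
        atTop (nhds 0) := by
  have hmean_vec : ∫ ω, h (X 0 ω) ∂μ = momentMap m h lamstar := by
    ext k
    rw [eval_integral hint, hmean]
  have hslln := ae_tendsto_empiricalMoments (measurable_pi_iff.2 hmeas)
    (fun _ _ hij => hindep.indepFun hij) hid (Integrable.of_eval hint)
  have hψ : ContinuousAt psi (momentMap m h lamstar) :=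
    hpsiC1.continuousOn.continuousAt (hVopen.mem_nhds hdV)
  filter_upwards [hslln] with ω hω
  rw [hmean_vec] at hω
  exact (tendsto_integral_abs_sub_maxentDensity hmeas hlam).comp (hpsistar ▸ hψ.tendsto.comp hω)

/-- for i.i.d. samples with `E[h(X₁)] = d = φ(λ*)`, the sample maximum-entropy
densities `f_{ψ(d̂_N)}` converge to `f* = f_{λ*}` in `L¹(m)` almost surely. -/
theorem sample_maxent_L1_convergence
    {S : Type*} [MeasurableSpace S] (m : Measure S) [SigmaFinite m]
    {M : ℕ} (h : S → Fin M → ℝ) (hmeas : ∀ k, Measurable fun x => h x k)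
    (lamstar : Fin M → ℝ) (hlam : lamstar ∈ interior (partitionDomain m h))
    (C : Matrix (Fin M) (Fin M) ℝ)
    (hC : ∀ j k, C j k = ∫ x, h x j * h x k * maxentDensity m h lamstar x ∂m
        - momentMap m h lamstar j * momentMap m h lamstar k)
    (hCpd : C.PosDef)
    (V : Set (Fin M → ℝ)) (hVopen : IsOpen V) (hdV : momentMap m h lamstar ∈ V)
    (psi : (Fin M → ℝ) → (Fin M → ℝ))
    (hpsiC1 : ContDiffOn ℝ 1 psi V)
    (hpsistar : psi (momentMap m h lamstar) = lamstar)
    (hpsiinv : ∀ d' ∈ V, momentMap m h (psi d') = d')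
    {Ω : Type*} [MeasurableSpace Ω] (μ : Measure Ω) [IsProbabilityMeasure μ]
    (X : ℕ → Ω → S) (hXmeas : ∀ n, Measurable (X n))
    (hindep : iIndepFun X μ)
    (hid : ∀ n, IdentDistrib (X n) (X 0) μ μ)
    (hint : ∀ k, Integrable (fun ω => h (X 0 ω) k) μ)
    (hmean : ∀ k, ∫ ω, h (X 0 ω) k ∂μ = momentMap m h lamstar k) :
    ∀ᵐ ω ∂μ,
      Tendsto
        (fun N => ∫ x, |maxentDensity m h (psi (empiricalMoments h X N ω)) x
            - maxentDensity m h lamstar x| ∂m)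
        atTop (nhds 0) :=
  sample_maxent_L1_convergence_general m h hmeas lamstar hlam V hVopen hdV psi hpsiC1 hpsistar μ X
    hindep hid hint hmean
end

section
/- Let g : S → ℝ be bounded and measurable, and set w(g) = ∫_S g(x)(h(x) − d) f*(x) dm(x) ∈ ℝ^M and δd = d̂_N − d. Then ∫_S g f̂^lin_N dm − ∫_S g f* dm = ⟨w(g), C⁻¹ δd⟩, and consequently (∫_S g f̂^lin_N dm − ∫_S g f* dm)² ≤ ⟨w(g), C⁻¹ w(g)⟩ · ⟨δd, C⁻¹ δd⟩. -/
/-! Integrating `g` against `f̂ˡⁱⁿ` adds to `∫ g f*` a term that is linear in `C⁻¹ δd`, with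
coefficient vector `w(g)`; the bound is then Cauchy–Schwarz for the positive definite form
`(u, v) ↦ ⟨u, C⁻¹ v⟩`. -/

open MeasureTheory Matrix

/-- The linearized maximum-entropy density
`f̂ˡⁱⁿ(x) = f*(x) (1 + ⟨h(x) − d, C⁻¹ (d̂ − d)⟩)`. -/
noncomputable def linearizedMaxent {S : Type*} {M : ℕ} (h : S → Fin M → ℝ)
    (fstar : S → ℝ) (d : Fin M → ℝ) (C : Matrix (Fin M) (Fin M) ℝ)
    (dhat : Fin M → ℝ) (x : S) : ℝ :=
  fstar x * (1 + (fun k => h x k - d k) ⬝ᵥ (C⁻¹ *ᵥ (dhat - d)))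

theorem Matrix.PosSemidef.dotProduct_mulVec_sq_le {n : Type*} [Fintype n]
    {P : Matrix n n ℝ} (hP : P.PosSemidef) (a b : n → ℝ) :
    (a ⬝ᵥ (P *ᵥ b)) ^ 2 ≤ (a ⬝ᵥ (P *ᵥ a)) * (b ⬝ᵥ (P *ᵥ b)) := by
  classical
  have hsymm : b ⬝ᵥ (P *ᵥ a) = a ⬝ᵥ (P *ᵥ b) := by
    rw [dotProduct_mulVec, ← mulVec_transpose, dotProduct_comm,
      ← conjTranspose_eq_transpose_of_trivial, hP.isHermitian.eq]
  simpa only [toLinearMap₂'_apply', sq, hsymm] using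
    LinearMap.BilinForm.apply_mul_apply_le_of_forall_zero_le (toLinearMap₂' ℝ P)
      (fun x => by simpa [toLinearMap₂'_apply'] using hP.dotProduct_mulVec_nonneg x) a b

theorem MeasureTheory.integral_dotProduct_const {S ι : Type*} [MeasurableSpace S]
    {μ : Measure S} [Fintype ι] {φ : S → ι → ℝ} (hφ : ∀ i, Integrable (fun x => φ x i) μ)
    (v : ι → ℝ) :
    ∫ x, φ x ⬝ᵥ v ∂μ = (fun i => ∫ x, φ x i ∂μ) ⬝ᵥ v := by
  simp only [dotProduct]
  rw [integral_finsetSum _ fun i _ => (hφ i).mul_const (v i)]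
  simp only [integral_mul_const]

theorem integral_mul_linearizedMaxent_sub {S : Type*} [MeasurableSpace S] {m : Measure S}
    {M : ℕ} {h : S → Fin M → ℝ} {fstar : S → ℝ} (d : Fin M → ℝ)
    (C : Matrix (Fin M) (Fin M) ℝ) (dhat : Fin M → ℝ) {g : S → ℝ}
    (hgf_int : Integrable (fun x => g x * fstar x) m)
    (hghf_int : ∀ k, Integrable (fun x => g x * h x k * fstar x) m) :
    ∫ x, g x * linearizedMaxent h fstar d C dhat x ∂m - ∫ x, g x * fstar x ∂m
      = (fun k => ∫ x, g x * (h x k - d k) * fstar x ∂m) ⬝ᵥ (C⁻¹ *ᵥ (dhat - d)) := by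
  have hcentered_int : ∀ k, Integrable (fun x => g x * (h x k - d k) * fstar x) m := fun k =>
    ((hghf_int k).sub (hgf_int.mul_const (d k))).congr
      (.of_forall fun x => by simp only [Pi.sub_apply]; ring)
  have hsplit : (fun x => g x * linearizedMaxent h fstar d C dhat x) = fun x =>
      g x * fstar x + (fun k => g x * (h x k - d k) * fstar x) ⬝ᵥ (C⁻¹ *ᵥ (dhat - d)) := by
    funext x
    simp only [linearizedMaxent, dotProduct, mul_add, mul_one, Finset.mul_sum]
    congr 1
    exact Finset.sum_congr rfl fun k _ => by ring
  rw [hsplit, integral_add hgf_int, integral_dotProduct_const hcentered_int, add_sub_cancel_left]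
  exact integrable_finsetSum _ fun k _ => (hcentered_int k).mul_const _

theorem linearizedMaxent_integral_bound_general
    {S : Type*} [MeasurableSpace S] (m : Measure S)
    {M : ℕ} (h : S → Fin M → ℝ) (fstar : S → ℝ) (d : Fin M → ℝ)
    (C : Matrix (Fin M) (Fin M) ℝ) (hCpd : C.PosDef) (dhat : Fin M → ℝ) (g : S → ℝ)
    (hgf_int : Integrable (fun x => g x * fstar x) m)
    (hghf_int : ∀ k, Integrable (fun x => g x * h x k * fstar x) m)
    (w : Fin M → ℝ)
    (hw : ∀ k, w k = ∫ x, g x * (h x k - d k) * fstar x ∂m) :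
    (∫ x, g x * linearizedMaxent h fstar d C dhat x ∂m - ∫ x, g x * fstar x ∂m
      = w ⬝ᵥ (C⁻¹ *ᵥ (dhat - d))) ∧
    (∫ x, g x * linearizedMaxent h fstar d C dhat x ∂m - ∫ x, g x * fstar x ∂m) ^ 2
      ≤ (w ⬝ᵥ (C⁻¹ *ᵥ w)) * ((dhat - d) ⬝ᵥ (C⁻¹ *ᵥ (dhat - d))) := by
  obtain rfl : w = fun k => ∫ x, g x * (h x k - d k) * fstar x ∂m := funext hw
  have hdiff := integral_mul_linearizedMaxent_sub (m := m) d C dhat hgf_int hghf_int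
  refine ⟨hdiff, ?_⟩
  rw [hdiff]
  exact hCpd.inv.posSemidef.dotProduct_mulVec_sq_le _ _

/-- for bounded measurable `g`, with `w(g) = ∫ g (h − d) f* dm` and
`δd = d̂_N − d`, one has `∫ g f̂ˡⁱⁿ_N dm − ∫ g f* dm = ⟨w(g), C⁻¹ δd⟩`, and hence by
Cauchy–Schwarz `(∫ g f̂ˡⁱⁿ_N dm − ∫ g f* dm)² ≤ ⟨w(g), C⁻¹ w(g)⟩ ⟨δd, C⁻¹ δd⟩`. -/
theorem linearizedMaxent_integral_bound
    {S : Type*} [MeasurableSpace S] (m : Measure S) [SigmaFinite m]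
    {M : ℕ} (h : S → Fin M → ℝ) (hmeas : ∀ k, Measurable fun x => h x k)
    (fstar : S → ℝ) (hfmeas : Measurable fstar) (hfnonneg : 0 ≤ᵐ[m] fstar)
    (hfint : Integrable fstar m) (hfone : ∫ x, fstar x ∂m = 1)
    (d : Fin M → ℝ)
    (hmom_int : ∀ k, Integrable (fun x => h x k * fstar x) m)
    (hd : ∀ k, ∫ x, h x k * fstar x ∂m = d k)
    (C : Matrix (Fin M) (Fin M) ℝ)
    (hC : ∀ j k, C j k = ∫ x, h x j * h x k * fstar x ∂m - d j * d k)
    (hCpd : C.PosDef)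
    (dhat : Fin M → ℝ)
    (g : S → ℝ) (hgmeas : Measurable g) (hgbdd : ∃ B : ℝ, ∀ x, |g x| ≤ B)
    (hgf_int : Integrable (fun x => g x * fstar x) m)
    (hghf_int : ∀ k, Integrable (fun x => g x * h x k * fstar x) m)
    (w : Fin M → ℝ)
    (hw : ∀ k, w k = ∫ x, g x * (h x k - d k) * fstar x ∂m) :
    (∫ x, g x * linearizedMaxent h fstar d C dhat x ∂m - ∫ x, g x * fstar x ∂m
      = w ⬝ᵥ (C⁻¹ *ᵥ (dhat - d))) ∧
    (∫ x, g x * linearizedMaxent h fstar d C dhat x ∂m - ∫ x, g x * fstar x ∂m) ^ 2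
      ≤ (w ⬝ᵥ (C⁻¹ *ᵥ w)) * ((dhat - d) ⬝ᵥ (C⁻¹ *ᵥ (dhat - d))) :=
  linearizedMaxent_integral_bound_general m h fstar d C hCpd dhat g hgf_int hghf_int w hw
end

section
/- Let g : S → ℝ be bounded and measurable, w(g) = ∫_S g(x)(h(x) − d) f*(x) dm(x), and let (X_n) be i.i.d. with E[h(X₁)] = d and covariance matrix Σ of h(X₁). Then for every a > 0, ℙ(|∫_S g f̂^lin_N dm − ∫_S g f* dm| ≤ a) ≥ 1 − ⟨w(g), C⁻¹ w(g)⟩ · tr(C⁻¹ Σ)/(N a²). -/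
open MeasureTheory ProbabilityTheory Matrix

/-!
The deviation `∫ g f̂ˡⁱⁿ_N dm − ∫ g f* dm` is linear in `d̂_N − d`: it equals
`⟨w(g), C⁻¹ (d̂_N − d)⟩`, the sample mean of the i.i.d. centred variables
`Yₙ = ⟨C⁻¹ w(g), h(Xₙ) − d⟩`. Cauchy–Schwarz for the form `C⁻¹` gives
`Yₙ² ≤ ⟨w(g), C⁻¹ w(g)⟩ ⟨h(Xₙ) − d, C⁻¹ (h(Xₙ) − d)⟩`, whose expectation is
`⟨w(g), C⁻¹ w(g)⟩ tr(C⁻¹ Σ)`. Chebyshev's inequality for the sample mean, whose variance is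
`Var(Y₀)/N`, concludes.
-/

namespace Matrix

variable {n : Type*} [Fintype n] {A : Matrix n n ℝ}

theorem dotProduct_mulVec_self_eq_sum (z : n → ℝ) :
    z ⬝ᵥ A *ᵥ z = ∑ j, ∑ k, A j k * (z k * z j) := by
  simp only [dotProduct, mulVec, Finset.mul_sum]
  exact Finset.sum_congr rfl fun j _ => Finset.sum_congr rfl fun k _ => by ring

theorem IsHermitian.dotProduct_mulVec_comm (hA : A.IsHermitian) (x y : n → ℝ) :
    x ⬝ᵥ A *ᵥ y = y ⬝ᵥ A *ᵥ x := by
  rw [dotProduct_mulVec, ← mulVec_transpose, ← conjTranspose_eq_transpose_of_trivial, hA.eq,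
    dotProduct_comm]

theorem PosSemidef.dotProduct_mulVec_sq_le_s14 [DecidableEq n] (hA : A.PosSemidef) (x y : n → ℝ) :
    (x ⬝ᵥ A *ᵥ y) ^ 2 ≤ (x ⬝ᵥ A *ᵥ x) * (y ⬝ᵥ A *ᵥ y) := by
  have hnonneg (z : n → ℝ) : 0 ≤ toLinearMap₂' ℝ A z z := by
    simpa [toLinearMap₂'_apply'] using hA.dotProduct_mulVec_nonneg z
  have := LinearMap.BilinForm.apply_mul_apply_le_of_forall_zero_le _ hnonneg x y
  simp only [toLinearMap₂'_apply'] at this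
  rwa [hA.isHermitian.dotProduct_mulVec_comm y, ← sq] at this

end Matrix

section SampleMean

variable {Ω : Type*} [MeasurableSpace Ω] {μ : Measure Ω} {Y : ℕ → Ω → ℝ}

noncomputable def sampleMean (Y : ℕ → Ω → ℝ) (N : ℕ) (ω : Ω) : ℝ :=
  (N : ℝ)⁻¹ * ∑ n ∈ Finset.range N, Y n ω

theorem integral_sampleMean (hY : Integrable (Y 0) μ)
    (hid : ∀ n, IdentDistrib (Y n) (Y 0) μ μ) {N : ℕ} (hN : N ≠ 0) :
    μ[sampleMean Y N] = μ[Y 0] := by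
  have hint (n : ℕ) : Integrable (Y n) μ := (hid n).symm.integrable_snd hY
  simp only [sampleMean]
  rw [integral_const_mul, integral_finsetSum _ fun n _ => hint n]
  simp_rw [fun n => (hid n).integral_eq]
  rw [Finset.sum_const, Finset.card_range, nsmul_eq_mul, inv_mul_cancel_left₀ (by simpa)]

theorem memLp_sampleMean (hY : MemLp (Y 0) 2 μ) (hid : ∀ n, IdentDistrib (Y n) (Y 0) μ μ)
    (N : ℕ) : MemLp (sampleMean Y N) 2 μ :=
  (memLp_finsetSum _ fun n _ => (hid n).symm.memLp_snd hY).const_mul _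

theorem variance_sampleMean [IsFiniteMeasure μ] (hY : MemLp (Y 0) 2 μ) (hind : iIndepFun Y μ)
    (hid : ∀ n, IdentDistrib (Y n) (Y 0) μ μ) (N : ℕ) :
    variance (sampleMean Y N) μ = variance (Y 0) μ / N := by
  have hsmul : sampleMean Y N = (N : ℝ)⁻¹ • ∑ n ∈ Finset.range N, Y n := by
    ext ω; simp [sampleMean, Finset.sum_apply]
  rw [hsmul, variance_smul, IndepFun.variance_sum (fun n _ => (hid n).symm.memLp_snd hY)
      fun i _ j _ hij => hind.indepFun hij]
  simp_rw [fun n => (hid n).variance_eq]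
  rw [Finset.sum_const, Finset.card_range, nsmul_eq_mul]
  rcases eq_or_ne (N : ℝ) 0 with hN | hN
  · simp [hN]
  · field_simp

theorem one_sub_le_measure_abs_sampleMean_sub_le [IsProbabilityMeasure μ]
    (hY : MemLp (Y 0) 2 μ) (hind : iIndepFun Y μ) (hid : ∀ n, IdentDistrib (Y n) (Y 0) μ μ)
    {N : ℕ} (hN : N ≠ 0) {a : ℝ} (ha : 0 < a) :
    1 - ENNReal.ofReal (variance (Y 0) μ / (N * a ^ 2))
      ≤ μ {ω | |sampleMean Y N ω - μ[Y 0]| ≤ a} := by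
  set E := {ω | |sampleMean Y N ω - μ[Y 0]| ≤ a}
  have hcheb := meas_ge_le_variance_div_sq (memLp_sampleMean hY hid N) ha
  rw [integral_sampleMean (hY.integrable one_le_two) hid hN, variance_sampleMean hY hind hid,
    div_div] at hcheb
  have hsub : Eᶜ ⊆ {ω | a ≤ |sampleMean Y N ω - μ[Y 0]|} := fun ω hω => by
    simp only [E, Set.mem_compl_iff, Set.mem_ofPred_eq, not_le] at hω
    exact hω.le
  calc 1 - ENNReal.ofReal (variance (Y 0) μ / (N * a ^ 2)) ≤ 1 - μ Eᶜ := by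
        gcongr; exact (measure_mono hsub).trans hcheb
    -- subadditivity `1 ≤ μ E + μ Eᶜ` avoids any measurability requirement on `E`
    _ ≤ μ E := tsub_le_iff_right.mpr (by simpa using measure_univ_le_add_compl (μ := μ) E)

end SampleMean

section RandomVector

variable {Ω ι : Type*} [MeasurableSpace Ω] {μ : Measure Ω} [Fintype ι] {Z : Ω → ι → ℝ}

theorem integrable_dotProduct_mulVec (hZ : ∀ k, MemLp (fun ω => Z ω k) 2 μ)
    (A : Matrix ι ι ℝ) : Integrable (fun ω => Z ω ⬝ᵥ A *ᵥ Z ω) μ := by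
  simp_rw [dotProduct_mulVec_self_eq_sum]
  exact integrable_finsetSum _ fun j _ => integrable_finsetSum _ fun k _ =>
    ((hZ k).integrable_mul (hZ j)).const_mul _

theorem integral_dotProduct_mulVec (hZ : ∀ k, MemLp (fun ω => Z ω k) 2 μ) (A : Matrix ι ι ℝ)
    {Sig : Matrix ι ι ℝ} (hSig : ∀ j k, Sig j k = ∫ ω, Z ω j * Z ω k ∂μ) :
    ∫ ω, Z ω ⬝ᵥ A *ᵥ Z ω ∂μ = (A * Sig).trace := by
  have hprod (j k : ι) : Integrable (fun ω => A j k * (Z ω k * Z ω j)) μ :=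
    ((hZ k).integrable_mul (hZ j)).const_mul _
  simp_rw [dotProduct_mulVec_self_eq_sum]
  rw [integral_finsetSum _ fun j _ => integrable_finsetSum _ fun k _ => hprod j k]
  simp_rw [integral_finsetSum _ fun k _ => hprod _ k, integral_const_mul, trace, diag, mul_apply,
    hSig]

theorem variance_mulVec_dotProduct_le [IsProbabilityMeasure μ] [DecidableEq ι]
    {B : Matrix ι ι ℝ} (hB : B.PosSemidef) (hZ : ∀ k, MemLp (fun ω => Z ω k) 2 μ) (x : ι → ℝ)
    {Sig : Matrix ι ι ℝ} (hSig : ∀ j k, Sig j k = ∫ ω, Z ω j * Z ω k ∂μ) :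
    variance (fun ω => (B *ᵥ x) ⬝ᵥ Z ω) μ ≤ (x ⬝ᵥ B *ᵥ x) * (B * Sig).trace := by
  have hmeas : AEStronglyMeasurable (fun ω => (B *ᵥ x) ⬝ᵥ Z ω) μ :=
    (memLp_finsetSum _ fun k _ => (hZ k).const_mul _).aestronglyMeasurable
  have hpoint (z : ι → ℝ) : ((B *ᵥ x) ⬝ᵥ z) ^ 2 ≤ (x ⬝ᵥ B *ᵥ x) * (z ⬝ᵥ B *ᵥ z) := by
    rw [dotProduct_comm, ← hB.isHermitian.dotProduct_mulVec_comm]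
    exact hB.dotProduct_mulVec_sq_le_s14 x z
  calc variance (fun ω => (B *ᵥ x) ⬝ᵥ Z ω) μ ≤ ∫ ω, ((B *ᵥ x) ⬝ᵥ Z ω) ^ 2 ∂μ :=
        variance_le_expectation_sq hmeas
    _ ≤ ∫ ω, (x ⬝ᵥ B *ᵥ x) * (Z ω ⬝ᵥ B *ᵥ Z ω) ∂μ :=
        integral_mono_of_nonneg (.of_forall fun ω => sq_nonneg _)
          ((integrable_dotProduct_mulVec hZ B).const_mul _) (.of_forall fun ω => hpoint (Z ω))
    _ = (x ⬝ᵥ B *ᵥ x) * (B * Sig).trace := by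
        rw [integral_const_mul, integral_dotProduct_mulVec hZ B hSig]

end RandomVector

section Moments

variable {S Ω : Type*} {M : ℕ}

theorem integral_mul_linearizedMaxent_sub_integral [MeasurableSpace S] {m : Measure S}
    {h : S → Fin M → ℝ} {fstar g : S → ℝ} {d : Fin M → ℝ} (C : Matrix (Fin M) (Fin M) ℝ)
    (dhat : Fin M → ℝ) (hgf : Integrable (fun x => g x * fstar x) m)
    (hghf : ∀ k, Integrable (fun x => g x * h x k * fstar x) m) :
    ∫ x, g x * linearizedMaxent h fstar d C dhat x ∂m - ∫ x, g x * fstar x ∂m =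
      (fun k => ∫ x, g x * (h x k - d k) * fstar x ∂m) ⬝ᵥ C⁻¹ *ᵥ (dhat - d) := by
  set c := C⁻¹ *ᵥ (dhat - d)
  have hint (k : Fin M) : Integrable (fun x => c k * (g x * (h x k - d k) * fstar x)) m := by
    refine ((hghf k).sub (hgf.const_mul (d k))).const_mul (c k) |>.congr ?_
    exact .of_forall fun x => by simp only [Pi.sub_apply]; ring
  have hexpand : (fun x => g x * linearizedMaxent h fstar d C dhat x) =
      fun x => g x * fstar x + ∑ k, c k * (g x * (h x k - d k) * fstar x) := by
    ext x
    simp only [linearizedMaxent, dotProduct, mul_add, mul_one, Finset.mul_sum]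
    exact congrArg _ (Finset.sum_congr rfl fun k _ => by ring)
  rw [hexpand, integral_add hgf (integrable_finsetSum _ fun k _ => hint k),
    integral_finsetSum _ fun k _ => hint k, add_sub_cancel_left, dotProduct]
  simp_rw [integral_const_mul, mul_comm]

theorem empiricalMoments_sub {h : S → Fin M → ℝ} {X : ℕ → Ω → S} {N : ℕ} (hN : N ≠ 0)
    (ω : Ω) (d : Fin M → ℝ) :
    empiricalMoments h X N ω - d = (N : ℝ)⁻¹ • ∑ n ∈ Finset.range N, (h (X n ω) - d) := by
  rw [empiricalMoments, Finset.sum_sub_distrib, smul_sub, Finset.sum_const, Finset.card_range,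
    ← Nat.cast_smul_eq_nsmul ℝ, smul_smul, inv_mul_cancel₀ (Nat.cast_ne_zero.mpr hN), one_smul]

theorem dotProduct_empiricalMoments_sub {h : S → Fin M → ℝ} {X : ℕ → Ω → S} {N : ℕ}
    (hN : N ≠ 0) (ω : Ω) (v d : Fin M → ℝ) :
    v ⬝ᵥ (empiricalMoments h X N ω - d) = sampleMean (fun n ω => v ⬝ᵥ (h (X n ω) - d)) N ω := by
  rw [empiricalMoments_sub hN, dotProduct_smul, dotProduct_sum, smul_eq_mul, sampleMean]

end Moments

theorem linearizedMaxent_probability_bound_general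
    {S : Type*} [MeasurableSpace S] (m : Measure S)
    {M : ℕ} (h : S → Fin M → ℝ) (hmeas : ∀ k, Measurable fun x => h x k)
    (fstar : S → ℝ)
    (d : Fin M → ℝ)
    (C : Matrix (Fin M) (Fin M) ℝ)
    (hCpd : C.PosDef)
    {Ω : Type*} [MeasurableSpace Ω] (μ : Measure Ω) [IsProbabilityMeasure μ]
    (X : ℕ → Ω → S)
    (hindep : iIndepFun X μ)
    (hid : ∀ n, IdentDistrib (X n) (X 0) μ μ)
    (hsq : ∀ j k, Integrable (fun ω => h (X 0 ω) j * h (X 0 ω) k) μ)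
    (hmean : ∀ k, ∫ ω, h (X 0 ω) k ∂μ = d k)
    (Sig : Matrix (Fin M) (Fin M) ℝ)
    (hSig : ∀ j k, Sig j k = ∫ ω, (h (X 0 ω) j - d j) * (h (X 0 ω) k - d k) ∂μ)
    (g : S → ℝ)
    (hgf_int : Integrable (fun x => g x * fstar x) m)
    (hghf_int : ∀ k, Integrable (fun x => g x * h x k * fstar x) m)
    (w : Fin M → ℝ)
    (hw : ∀ k, w k = ∫ x, g x * (h x k - d k) * fstar x ∂m)
    (N : ℕ) (hN : 0 < N) :
    ∀ a : ℝ, 0 < a →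
      1 - ENNReal.ofReal ((w ⬝ᵥ (C⁻¹ *ᵥ w)) * (C⁻¹ * Sig).trace / (N * a ^ 2))
        ≤ μ {ω | |∫ x, g x * linearizedMaxent h fstar d C (empiricalMoments h X N ω) x ∂m
              - ∫ x, g x * fstar x ∂m| ≤ a} := by
  intro a ha
  set Y : ℕ → Ω → ℝ := fun n ω => (C⁻¹ *ᵥ w) ⬝ᵥ (h (X n ω) - d)
  have hφ : Measurable fun x => (C⁻¹ *ᵥ w) ⬝ᵥ (h x - d) := by
    have : Measurable h := measurable_pi_lambda _ hmeas
    fun_prop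
  have hL2 (k : Fin M) : MemLp (fun ω => h (X 0 ω) k) 2 μ :=
    (memLp_two_iff_integrable_sq ((hmeas k).comp_aemeasurable
      (hid 0).aemeasurable_fst).aestronglyMeasurable).mpr (by simpa [sq] using hsq k k)
  have hZ (k : Fin M) : MemLp (fun ω => (h (X 0 ω) - d) k) 2 μ := (hL2 k).sub (memLp_const _)
  have hY0 : MemLp (Y 0) 2 μ := memLp_finsetSum _ fun k _ => (hZ k).const_mul _
  have hY0mean : μ[Y 0] = 0 := by
    simp only [Y, dotProduct]
    rw [integral_finsetSum _ fun k _ => ((hZ k).integrable one_le_two).const_mul _]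
    simp [integral_const_mul, integral_sub ((hL2 _).integrable one_le_two), hmean]
  have hdev (ω : Ω) : ∫ x, g x * linearizedMaxent h fstar d C (empiricalMoments h X N ω) x ∂m
      - ∫ x, g x * fstar x ∂m = sampleMean Y N ω - μ[Y 0] := by
    rw [integral_mul_linearizedMaxent_sub_integral C _ hgf_int hghf_int, ← funext hw,
      hCpd.isHermitian.inv.dotProduct_mulVec_comm, dotProduct_comm,
      dotProduct_empiricalMoments_sub hN.ne', hY0mean, sub_zero]
  simp_rw [hdev]
  refine le_trans ?_ (one_sub_le_measure_abs_sampleMean_sub_le hY0 (hindep.comp _ fun _ => hφ)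
    (fun n => (hid n).comp hφ) hN.ne' ha)
  gcongr
  exact variance_mulVec_dotProduct_le hCpd.inv.posSemidef hZ w (by simpa using hSig)

/-- for bounded measurable `g` and i.i.d. samples, the probability that
`|∫ g f̂ˡⁱⁿ_N dm − ∫ g f* dm| ≤ a` is at least
`1 − ⟨w(g), C⁻¹ w(g)⟩ tr(C⁻¹ Σ)/(N a²)`. -/
theorem linearizedMaxent_probability_bound
    {S : Type*} [MeasurableSpace S] (m : Measure S) [SigmaFinite m]
    {M : ℕ} (h : S → Fin M → ℝ) (hmeas : ∀ k, Measurable fun x => h x k)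
    (fstar : S → ℝ) (hfmeas : Measurable fstar) (hfnonneg : 0 ≤ᵐ[m] fstar)
    (hfint : Integrable fstar m) (hfone : ∫ x, fstar x ∂m = 1)
    (d : Fin M → ℝ)
    (hmom_int : ∀ k, Integrable (fun x => h x k * fstar x) m)
    (hd : ∀ k, ∫ x, h x k * fstar x ∂m = d k)
    (C : Matrix (Fin M) (Fin M) ℝ)
    (hC : ∀ j k, C j k = ∫ x, h x j * h x k * fstar x ∂m - d j * d k)
    (hCpd : C.PosDef)
    {Ω : Type*} [MeasurableSpace Ω] (μ : Measure Ω) [IsProbabilityMeasure μ]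
    (X : ℕ → Ω → S) (hXmeas : ∀ n, Measurable (X n))
    (hindep : iIndepFun X μ)
    (hid : ∀ n, IdentDistrib (X n) (X 0) μ μ)
    (hsq : ∀ j k, Integrable (fun ω => h (X 0 ω) j * h (X 0 ω) k) μ)
    (hint : ∀ k, Integrable (fun ω => h (X 0 ω) k) μ)
    (hmean : ∀ k, ∫ ω, h (X 0 ω) k ∂μ = d k)
    (Sig : Matrix (Fin M) (Fin M) ℝ)
    (hSig : ∀ j k, Sig j k = ∫ ω, (h (X 0 ω) j - d j) * (h (X 0 ω) k - d k) ∂μ)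
    (g : S → ℝ) (hgmeas : Measurable g) (hgbdd : ∃ B : ℝ, ∀ x, |g x| ≤ B)
    (hgf_int : Integrable (fun x => g x * fstar x) m)
    (hghf_int : ∀ k, Integrable (fun x => g x * h x k * fstar x) m)
    (w : Fin M → ℝ)
    (hw : ∀ k, w k = ∫ x, g x * (h x k - d k) * fstar x ∂m)
    (N : ℕ) (hN : 0 < N) :
    ∀ a : ℝ, 0 < a →
      1 - ENNReal.ofReal ((w ⬝ᵥ (C⁻¹ *ᵥ w)) * (C⁻¹ * Sig).trace / (N * a ^ 2))
        ≤ μ {ω | |∫ x, g x * linearizedMaxent h fstar d C (empiricalMoments h X N ω) x ∂m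
              - ∫ x, g x * fstar x ∂m| ≤ a} :=
  linearizedMaxent_probability_bound_general m h hmeas fstar d C hCpd μ X hindep hid hsq hmean Sig
    hSig g hgf_int hghf_int w hw N hN
end
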